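/- Let λ > 0, a ≥ 0, and suppose λ_k ≤ σ·2^{k/2} for all integers k* < k ≤ k^* with σ > 0. For a nonnegative sequence (a_k) with ∑_{k>k*} 2^{2αk} a_k² ≤ M² (α ≥ 1/2) and ∑_{k>k*} 2^{2α₀k}a_k² ≤ M₀² (0 ≤ α₀ ≤ α), and for any t₀ > 0, there exists an integer k̄ with k* ≤ k̄ ≤ k^* such that ∑_{k=k*+1}^{k^*} λ_k min(a_k, λ_k) ≤ σ^γ [ t₀^{−(1−q/2−α₀q)_+} J_{1−q/2−α₀q}^{(q)}(k*, k̄) M₀^q + t₀^{α−1/2} J_{α−1/2}^{(1)}(k̄, k^*) M ], where γ is as in Proposition 1 and J_c^{(q)} is the partial geometric-series functional. -/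

import Mathlib

open Finset

/-- The partial geometric-series functional J_c^{(q)}(k₁,k₂). -/
noncomputable def Jfun (c q : ℝ) (k1 k2 : ℕ) : ℝ :=
  if c ≤ 0 then
    (∑ k ∈ Finset.Icc (k1 + 1) k2, (2 : ℝ) ^ (c * (k : ℝ) / (1 - q / 2))) ^ (1 - q / 2)
  else
    (∑ k ∈ Finset.range (k2 - k1), (2 : ℝ) ^ (-c * (k : ℝ) / (1 - q / 2))) ^ (1 - q / 2)

/-
Split the levels at `kb`. Below `kb`,
`λ min(a, λ) ≤ λ^(2-q) a^q ≤ σ^(2-q) 2^(ck) (2^(2α₀k) a²)^(q/2)` with `c = 1 - q/2 - α₀q`,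
and Hölder with exponents `1 - q/2`, `q/2` leaves `M₀^q` times a geometric sum in
`2^(ck/(1-q/2))`, which for `c > 0` is dominated by its top term `2^(c kb)`. Above `kb`,
`min(a, λ) ≤ a` and Cauchy–Schwarz leave `M` times a geometric sum dominated by its bottom term
`2^(-(α-1/2)(kb+1))`. Choosing `2^kb ≈ σ^((q-1)/d) / t₀` with `d = α - 1/2 + max c 0` turns both
dominant terms, multiplied by `σ^(2-q)` resp. `σ`, into `σ^γ` times a power of `t₀`.
-/

open Real

theorem sq_rpow_div_two {x : ℝ} (hx : 0 ≤ x) (p : ℝ) : (x ^ 2) ^ (p / 2) = x ^ p := by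
  rw [← rpow_two, ← rpow_mul hx]
  ring_nf

theorem mul_min_le_rpow_mul_rpow {x y p : ℝ} (hx : 0 ≤ x) (hy : 0 ≤ y) (hp0 : 0 ≤ p)
    (hp1 : p ≤ 1) : y * min x y ≤ y ^ (2 - p) * x ^ p := by
  have hm : 0 ≤ min x y := le_min hx hy
  calc y * min x y = y * (min x y ^ (1 - p) * min x y ^ p) := by
        rw [← rpow_add' hm (by norm_num), sub_add_cancel, rpow_one]
    _ ≤ y * (y ^ (1 - p) * x ^ p) := by
        gcongr ?_ * (?_ * ?_)
        · exact rpow_le_rpow hm (min_le_right _ _) (by linarith)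
        · exact rpow_le_rpow hm (min_le_left _ _) hp0
    _ = y ^ (2 - p) * x ^ p := by
        rw [← mul_assoc, ← rpow_one_add' hy (by linarith)]
        ring_nf

theorem sum_rpow_mul_rpow_one_sub_le {ι : Type*} (s : Finset ι) {u v : ι → ℝ}
    (hu : ∀ i ∈ s, 0 ≤ u i) (hv : ∀ i ∈ s, 0 ≤ v i) {θ : ℝ} (hθ0 : 0 < θ) (hθ1 : θ ≤ 1) :
    ∑ i ∈ s, u i ^ θ * v i ^ (1 - θ) ≤ (∑ i ∈ s, u i) ^ θ * (∑ i ∈ s, v i) ^ (1 - θ) := by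
  rcases hθ1.eq_or_lt with rfl | hθ1
  · simp
  have hθ' : 0 < 1 - θ := by linarith
  have h := inner_le_Lp_mul_Lq_of_nonneg s (Real.HolderConjugate.inv_one_sub_inv hθ0 hθ1)
    (fun i hi => rpow_nonneg (hu i hi) θ) (fun i hi => rpow_nonneg (hv i hi) (1 - θ))
  have hcancel : ∀ {w : ℝ} {r : ℝ}, 0 ≤ w → 0 < r → (w ^ r) ^ r⁻¹ = w := fun hw hr => by
    rw [← rpow_mul hw, mul_inv_cancel₀ hr.ne', rpow_one]
  rwa [sum_congr rfl fun i hi => hcancel (hu i hi) hθ0,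
    sum_congr rfl fun i hi => hcancel (hv i hi) hθ', one_div, one_div, inv_inv, inv_inv] at h

theorem mul_min_le_two_rpow {x y σ p β c k : ℝ} (hx : 0 ≤ x) (hy : 0 ≤ y) (hσ : 0 ≤ σ)
    (hp0 : 0 ≤ p) (hp1 : p ≤ 1) (hc : c = 1 - p / 2 - β * p) (hyk : y ≤ σ * 2 ^ (k / 2)) :
    y * min x y ≤ σ ^ (2 - p) * (((2 : ℝ) ^ (c * k / (1 - p / 2))) ^ (1 - p / 2)
      * ((2 : ℝ) ^ (2 * β * k) * x ^ 2) ^ (1 - (1 - p / 2))) := calc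
  y * min x y ≤ y ^ (2 - p) * x ^ p := mul_min_le_rpow_mul_rpow hx hy hp0 hp1
  _ ≤ (σ * 2 ^ (k / 2)) ^ (2 - p) * x ^ p :=
    mul_le_mul_of_nonneg_right (rpow_le_rpow hy hyk (by linarith : (0 : ℝ) ≤ 2 - p))
      (rpow_nonneg hx p)
  _ = _ := by
    have hθ : 1 - p / 2 ≠ 0 := by linarith
    have h2 : (2 : ℝ) ^ (k / 2 * (2 - p)) = 2 ^ (c * k) * 2 ^ (2 * β * k * (p / 2)) := by
      rw [← rpow_add two_pos, hc]
      ring_nf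
    rw [sub_sub_cancel, mul_rpow (by positivity) (sq_nonneg _), sq_rpow_div_two hx,
      mul_rpow hσ (by positivity), ← rpow_mul zero_le_two, ← rpow_mul zero_le_two,
      ← rpow_mul zero_le_two, div_mul_cancel₀ _ hθ, h2]
    ring

theorem sum_mul_min_le {s : Finset ℕ} {lam a : ℕ → ℝ} {σ p β c M : ℝ} (hp0 : 0 ≤ p)
    (hp1 : p ≤ 1) (hc : c = 1 - p / 2 - β * p) (hσ : 0 ≤ σ) (hlam0 : ∀ k, 0 ≤ lam k)
    (hlam : ∀ k ∈ s, lam k ≤ σ * 2 ^ ((k : ℝ) / 2)) (ha : ∀ k, 0 ≤ a k) (hM0 : 0 ≤ M)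
    (hM : ∑ k ∈ s, (2 : ℝ) ^ (2 * β * k) * a k ^ 2 ≤ M ^ 2) :
    ∑ k ∈ s, lam k * min (a k) (lam k)
      ≤ σ ^ (2 - p) * (∑ k ∈ s, (2 : ℝ) ^ (c * k / (1 - p / 2))) ^ (1 - p / 2) * M ^ p := by
  refine (sum_le_sum fun k hk =>
    mul_min_le_two_rpow (ha k) (hlam0 k) hσ hp0 hp1 hc (hlam k hk)).trans ?_
  rw [← mul_sum, mul_assoc]
  gcongr
  calc _ ≤ (∑ k ∈ s, (2 : ℝ) ^ (c * k / (1 - p / 2))) ^ (1 - p / 2)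
          * (∑ k ∈ s, (2 : ℝ) ^ (2 * β * k) * a k ^ 2) ^ (1 - (1 - p / 2)) :=
        sum_rpow_mul_rpow_one_sub_le s (fun _ _ => by positivity) (fun k _ => by positivity)
          (by linarith) (by linarith)
    _ ≤ (∑ k ∈ s, (2 : ℝ) ^ (c * k / (1 - p / 2))) ^ (1 - p / 2) * (M ^ 2) ^ (p / 2) := by
        rw [sub_sub_cancel]
        gcongr _ * ?_
        exact rpow_le_rpow (sum_nonneg fun k _ => by positivity) hM (by linarith)
    _ = _ := by rw [sq_rpow_div_two hM0]

theorem sum_Ioc_two_rpow_mul_sq_le {a : ℕ → ℝ} {β M : ℝ} {m k1 k2 : ℕ} (h : m ≤ k1)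
    (hs : Summable fun n : ℕ => (2 : ℝ) ^ (2 * β * ((m : ℝ) + 1 + n)) * a (m + 1 + n) ^ 2)
    (hb : ∑' n : ℕ, (2 : ℝ) ^ (2 * β * ((m : ℝ) + 1 + n)) * a (m + 1 + n) ^ 2 ≤ M ^ 2) :
    ∑ k ∈ Ioc k1 k2, (2 : ℝ) ^ (2 * β * k) * a k ^ 2 ≤ M ^ 2 := by
  set F : ℕ → ℝ := fun k => (2 : ℝ) ^ (2 * β * k) * a k ^ 2
  have hF : ∀ n : ℕ, F (m + 1 + n) = (2 : ℝ) ^ (2 * β * ((m : ℝ) + 1 + n)) * a (m + 1 + n) ^ 2 :=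
    fun n => by simp only [F]; push_cast; ring_nf
  calc ∑ k ∈ Ioc k1 k2, F k ≤ ∑ k ∈ Ioc m k2, F k :=
        sum_le_sum_of_subset_of_nonneg (Ioc_subset_Ioc_left h) fun k _ _ => by positivity
    _ = ∑ n ∈ range (k2 - m), F (m + 1 + n) := by
        rw [← Ico_add_one_add_one_eq_Ioc, sum_Ico_eq_sum_range, Nat.add_sub_add_right]
    _ ≤ ∑' n : ℕ, F (m + 1 + n) :=
        (show Summable fun n => F (m + 1 + n) by simpa only [hF] using hs).sum_le_tsum _
          fun n _ => by positivity
    _ ≤ M ^ 2 := by simpa only [hF] using hb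

theorem sum_Ioc_two_rpow_eq_bottom (r : ℝ) (k1 k2 : ℕ) :
    ∑ k ∈ Ioc k1 k2, (2 : ℝ) ^ (r * k)
      = 2 ^ (r * (k1 + 1)) * ∑ j ∈ range (k2 - k1), (2 : ℝ) ^ (r * j) := by
  rw [← Ico_add_one_add_one_eq_Ioc, sum_Ico_eq_sum_range, Nat.add_sub_add_right, mul_sum]
  refine sum_congr rfl fun j _ => ?_
  rw [← rpow_add two_pos]
  push_cast
  ring_nf

theorem sum_Ioc_two_rpow_eq_top (r : ℝ) (k1 k2 : ℕ) :
    ∑ k ∈ Ioc k1 k2, (2 : ℝ) ^ (r * k)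
      = 2 ^ (r * k2) * ∑ j ∈ range (k2 - k1), (2 : ℝ) ^ (-r * j) := by
  rw [← Ico_add_one_add_one_eq_Ioc, sum_Ico_eq_sum_range, Nat.add_sub_add_right,
    ← sum_range_reflect, mul_sum]
  refine sum_congr rfl fun j hj => ?_
  have hk : ((k1 + 1 + (k2 - k1 - 1 - j) : ℕ) : ℝ) = k2 - j := by
    rw [eq_sub_iff_add_eq]
    exact_mod_cast (by have := mem_range.1 hj; omega : k1 + 1 + (k2 - k1 - 1 - j) + j = k2)
  rw [hk, ← rpow_add two_pos]
  ring_nf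

theorem exists_nat_clamp (L : ℝ) {m n : ℕ} (h : m ≤ n) :
    ∃ k, m ≤ k ∧ k ≤ n ∧ (m < k → (k : ℝ) ≤ L) ∧ (k < n → L ≤ k + 1) := by
  refine ⟨max m (min n ⌊L⌋₊), le_max_left _ _, max_le h (min_le_left _ _), fun hk => ?_,
    fun hk => ?_⟩
  · have hkL : max m (min n ⌊L⌋₊) ≤ ⌊L⌋₊ := by omega
    have hL : 1 ≤ L := Nat.floor_pos.1 (by omega)
    exact (Nat.cast_le.2 hkL).trans (Nat.floor_le (by linarith))
  · have hkL : ⌊L⌋₊ ≤ max m (min n ⌊L⌋₊) := by omega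
    exact (Nat.lt_floor_add_one L).le.trans (by exact_mod_cast Nat.add_le_add_right hkL 1)

theorem two_rpow_mul_sub_logb (x s : ℝ) {σ t : ℝ} (hσ : 0 < σ) (ht : 0 < t) :
    (2 : ℝ) ^ (x * (s * logb 2 σ - logb 2 t)) = σ ^ (x * s) * t ^ (-x) := by
  rw [show x * (s * logb 2 σ - logb 2 t) = logb 2 σ * (x * s) + logb 2 t * (-x) by ring,
    rpow_add two_pos, rpow_mul zero_le_two, rpow_mul zero_le_two,
    rpow_logb two_pos (by norm_num) hσ, rpow_logb two_pos (by norm_num) ht]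

theorem gamma_eq_two_sub_add_mul_and_one_sub_mul {α q α₀ γ s : ℝ} (hα : 1 / 2 ≤ α)
    (hq0 : 0 ≤ q) (hq1 : q ≤ 1) (hα₀ : α₀ ≤ α)
    (hγ : γ = if α = 1 / 2 then 1 else
      ((2 - q) * (α - 1 / 2) + max (1 - q / 2 - q * α₀) 0) /
        (α - 1 / 2 + max (1 - q / 2 - q * α₀) 0))
    (hs : s = (q - 1) / (α - 1 / 2 + max (1 - q / 2 - α₀ * q) 0)) :
    γ = 2 - q + max (1 - q / 2 - α₀ * q) 0 * s ∧ γ = 1 - (α - 1 / 2) * s := by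
  rw [mul_comm q α₀] at hγ
  subst hs
  have hm : 0 ≤ max (1 - q / 2 - α₀ * q) 0 := le_max_right _ _
  -- at `α = 1/2` the low-frequency exponent can only be nonpositive when `q = 1`
  have hq : α = 1 / 2 → max (1 - q / 2 - α₀ * q) 0 = 0 → q = 1 := fun hα' hm0 =>
    le_antisymm hq1 (by nlinarith [max_eq_right_iff.1 hm0])
  generalize max (1 - q / 2 - α₀ * q) 0 = m at *
  split_ifs at hγ with hα'
  · subst hγ
    refine ⟨?_, by rw [hα']; ring⟩
    rcases hm.eq_or_lt with rfl | hm0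
    · rw [hq hα' rfl]
      ring
    · rw [hα', sub_self, zero_add, mul_div_cancel₀ _ hm0.ne']
      ring
  · have he : 0 < α - 1 / 2 := sub_pos.2 (lt_of_le_of_ne hα (Ne.symm hα'))
    have hd : α - 1 / 2 + m ≠ 0 := (add_pos_of_pos_of_nonneg he hm).ne'
    subst hγ
    constructor
    · rw [div_eq_iff hd, add_mul, mul_assoc, div_mul_cancel₀ _ hd]
      ring
    · rw [div_eq_iff hd, sub_mul 1, mul_assoc, div_mul_cancel₀ _ hd]
      ring

section

variable {c q : ℝ} {k1 k2 : ℕ}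

theorem Jfun_nonneg : 0 ≤ Jfun c q k1 k2 := by
  unfold Jfun
  split_ifs <;> positivity

theorem Jfun_of_nonpos (hc : c ≤ 0) :
    Jfun c q k1 k2 = (∑ k ∈ Ioc k1 k2, (2 : ℝ) ^ (c * k / (1 - q / 2))) ^ (1 - q / 2) := by
  rw [Jfun, if_pos hc, Icc_add_one_left_eq_Ioc]

theorem rpow_sum_Ioc_eq_two_rpow_mul_Jfun (hc : 0 < c) (hq : q ≠ 2) :
    (∑ k ∈ Ioc k1 k2, (2 : ℝ) ^ (c * k / (1 - q / 2))) ^ (1 - q / 2)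
      = 2 ^ (c * k2) * Jfun c q k1 k2 := by
  have hθ : 1 - q / 2 ≠ 0 := fun h => hq (by linarith)
  simp_rw [Jfun, if_neg hc.not_ge, mul_div_right_comm, sum_Ioc_two_rpow_eq_top, neg_div]
  rw [mul_rpow (by positivity) (by positivity), ← rpow_mul zero_le_two]
  congr 2
  field_simp

theorem rpow_sum_Ioc_neg_eq_two_rpow_mul_Jfun (hc : 0 < c) (hq : q ≠ 2) :
    (∑ k ∈ Ioc k1 k2, (2 : ℝ) ^ (-c * k / (1 - q / 2))) ^ (1 - q / 2)
      = 2 ^ (-c * (k1 + 1)) * Jfun c q k1 k2 := by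
  have hθ : 1 - q / 2 ≠ 0 := fun h => hq (by linarith)
  simp_rw [Jfun, if_neg hc.not_ge, mul_div_right_comm, sum_Ioc_two_rpow_eq_bottom]
  rw [mul_rpow (by positivity) (by positivity), ← rpow_mul zero_le_two]
  congr 2
  field_simp

theorem rpow_sum_Ioc_le_mul_Jfun {B : ℝ} (hq : q < 2) (hB0 : 0 ≤ B) (hB_nonpos : c ≤ 0 → 1 ≤ B)
    (hB_pos : 0 < c → k1 < k2 → (2 : ℝ) ^ (c * k2) ≤ B) :
    (∑ k ∈ Ioc k1 k2, (2 : ℝ) ^ (c * k / (1 - q / 2))) ^ (1 - q / 2) ≤ B * Jfun c q k1 k2 := by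
  rcases le_or_gt c 0 with hc | hc
  · rw [← Jfun_of_nonpos hc]
    exact le_mul_of_one_le_left Jfun_nonneg (hB_nonpos hc)
  rcases le_or_gt k2 k1 with hk | hk
  · rw [Ioc_eq_empty_of_le hk, sum_empty, zero_rpow (by linarith)]
    exact mul_nonneg hB0 Jfun_nonneg
  rw [rpow_sum_Ioc_eq_two_rpow_mul_Jfun hc hq.ne]
  exact mul_le_mul_of_nonneg_right (hB_pos hc hk) Jfun_nonneg

theorem rpow_sum_Ioc_neg_le_mul_Jfun {B : ℝ} (hq : q < 2) (hc : 0 ≤ c) (hB0 : 0 ≤ B)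
    (hB_zero : c = 0 → 1 ≤ B) (hB_pos : 0 < c → k1 < k2 → (2 : ℝ) ^ (-c * (k1 + 1)) ≤ B) :
    (∑ k ∈ Ioc k1 k2, (2 : ℝ) ^ (-c * k / (1 - q / 2))) ^ (1 - q / 2) ≤ B * Jfun c q k1 k2 := by
  rcases hc.eq_or_lt with rfl | hc
  · rw [neg_zero, ← Jfun_of_nonpos le_rfl]
    exact le_mul_of_one_le_left Jfun_nonneg (hB_zero rfl)
  rcases le_or_gt k2 k1 with hk | hk
  · rw [Ioc_eq_empty_of_le hk, sum_empty, zero_rpow (by linarith)]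
    exact mul_nonneg hB0 Jfun_nonneg
  rw [rpow_sum_Ioc_neg_eq_two_rpow_mul_Jfun hc hq.ne]
  exact mul_le_mul_of_nonneg_right (hB_pos hc hk) Jfun_nonneg

variable {lam a : ℕ → ℝ} {σ t₀ s γ : ℝ}

theorem sum_Ioc_mul_min_le_low {α₀ M₀ : ℝ} (hq0 : 0 ≤ q) (hq1 : q ≤ 1) (hσ : 0 < σ)
    (ht₀ : 0 < t₀) (hlam0 : ∀ k, 0 ≤ lam k)
    (hlam : ∀ k, k1 < k → k ≤ k2 → lam k ≤ σ * 2 ^ ((k : ℝ) / 2)) (ha : ∀ k, 0 ≤ a k)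
    (hM₀ : 0 ≤ M₀) (hsum : ∑ k ∈ Ioc k1 k2, (2 : ℝ) ^ (2 * α₀ * k) * a k ^ 2 ≤ M₀ ^ 2)
    (hγ : γ = 2 - q + max (1 - q / 2 - α₀ * q) 0 * s)
    (hk : k1 < k2 → (k2 : ℝ) ≤ s * logb 2 σ - logb 2 t₀) :
    ∑ k ∈ Ioc k1 k2, lam k * min (a k) (lam k)
      ≤ σ ^ γ * (t₀ ^ (-max (1 - q / 2 - α₀ * q) 0) * Jfun (1 - q / 2 - α₀ * q) q k1 k2
        * M₀ ^ q) := by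
  set c := 1 - q / 2 - α₀ * q
  set m := max c 0
  have hB : (∑ k ∈ Ioc k1 k2, (2 : ℝ) ^ (c * k / (1 - q / 2))) ^ (1 - q / 2)
      ≤ σ ^ (m * s) * t₀ ^ (-m) * Jfun c q k1 k2 := by
    refine rpow_sum_Ioc_le_mul_Jfun (by linarith) (by positivity)
      (fun hc => by simp [m, max_eq_right hc]) fun hc hk12 => ?_
    rw [show m = c from max_eq_left hc.le, ← two_rpow_mul_sub_logb c s hσ ht₀]
    exact rpow_le_rpow_of_exponent_le one_le_two (mul_le_mul_of_nonneg_left (hk hk12) hc.le)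
  calc ∑ k ∈ Ioc k1 k2, lam k * min (a k) (lam k)
      ≤ σ ^ (2 - q) * (∑ k ∈ Ioc k1 k2, (2 : ℝ) ^ (c * k / (1 - q / 2))) ^ (1 - q / 2)
        * M₀ ^ q :=
        sum_mul_min_le hq0 hq1 rfl hσ.le hlam0
          (fun k hk => hlam k (mem_Ioc.1 hk).1 (mem_Ioc.1 hk).2) ha hM₀ hsum
    _ ≤ σ ^ (2 - q) * (σ ^ (m * s) * t₀ ^ (-m) * Jfun c q k1 k2) * M₀ ^ q := by gcongr
    _ = σ ^ γ * (t₀ ^ (-m) * Jfun c q k1 k2 * M₀ ^ q) := by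
        rw [hγ, rpow_add hσ]
        ring

theorem sum_Ioc_mul_min_le_high {α M : ℝ} (hα : 1 / 2 ≤ α) (hσ : 0 < σ) (ht₀ : 0 < t₀)
    (hlam0 : ∀ k, 0 ≤ lam k) (hlam : ∀ k, k1 < k → k ≤ k2 → lam k ≤ σ * 2 ^ ((k : ℝ) / 2))
    (ha : ∀ k, 0 ≤ a k) (hM : 0 ≤ M)
    (hsum : ∑ k ∈ Ioc k1 k2, (2 : ℝ) ^ (2 * α * k) * a k ^ 2 ≤ M ^ 2)
    (hγ : γ = 1 - (α - 1 / 2) * s) (hk : k1 < k2 → s * logb 2 σ - logb 2 t₀ ≤ k1 + 1) :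
    ∑ k ∈ Ioc k1 k2, lam k * min (a k) (lam k)
      ≤ σ ^ γ * (t₀ ^ (α - 1 / 2) * Jfun (α - 1 / 2) 1 k1 k2 * M) := by
  set e := α - 1 / 2
  have hB : (∑ k ∈ Ioc k1 k2, (2 : ℝ) ^ (-e * k / (1 - 1 / 2))) ^ (1 - (1 : ℝ) / 2)
      ≤ σ ^ (-e * s) * t₀ ^ e * Jfun e 1 k1 k2 := by
    refine rpow_sum_Ioc_neg_le_mul_Jfun (by norm_num) (sub_nonneg.2 hα) (by positivity)
      (fun he => by simp [he]) fun he hk12 => ?_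
    have h2 := two_rpow_mul_sub_logb (-e) s hσ ht₀
    rw [neg_neg] at h2
    rw [← h2]
    exact rpow_le_rpow_of_exponent_le one_le_two
      (mul_le_mul_of_nonpos_left (hk hk12) (neg_nonpos.2 he.le))
  calc ∑ k ∈ Ioc k1 k2, lam k * min (a k) (lam k)
      ≤ σ ^ (2 - 1 : ℝ) * (∑ k ∈ Ioc k1 k2, (2 : ℝ) ^ (-e * k / (1 - 1 / 2))) ^ (1 - (1 : ℝ) / 2)
        * M ^ (1 : ℝ) :=
        sum_mul_min_le zero_le_one le_rfl (by ring) hσ.le hlam0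
          (fun k hk => hlam k (mem_Ioc.1 hk).1 (mem_Ioc.1 hk).2) ha hM hsum
    _ ≤ σ ^ (2 - 1 : ℝ) * (σ ^ (-e * s) * t₀ ^ e * Jfun e 1 k1 k2) * M ^ (1 : ℝ) := by gcongr
    _ = σ ^ γ * (t₀ ^ e * Jfun e 1 k1 k2 * M) := by
        rw [hγ, sub_eq_add_neg 1, rpow_add hσ, ← neg_mul, show (2 : ℝ) - 1 = 1 by norm_num,
          rpow_one, rpow_one]
        ring

end

theorem stmt17_general (σ α q α₀ t₀ M M₀ : ℝ) (ks ke : ℕ) (lam a : ℕ → ℝ)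
    (hσ : 0 < σ) (hα : 1 / 2 ≤ α) (hq0 : 0 ≤ q) (hq1 : q ≤ 1)
    (hα₀ : α₀ ≤ α) (hks : ks ≤ ke)
    (hlam0 : ∀ k, 0 ≤ lam k)
    (hlam : ∀ k, ks < k → k ≤ ke → lam k ≤ σ * (2 : ℝ) ^ ((k : ℝ) / 2))
    (ha : ∀ k, 0 ≤ a k) (hM : 0 ≤ M) (hM₀ : 0 ≤ M₀) (ht₀ : 0 < t₀)
    (hsumα : Summable (fun n : ℕ =>
      (2 : ℝ) ^ (2 * α * ((ks : ℝ) + 1 + (n : ℝ))) * (a (ks + 1 + n)) ^ 2))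
    (hsumα₀ : Summable (fun n : ℕ =>
      (2 : ℝ) ^ (2 * α₀ * ((ks : ℝ) + 1 + (n : ℝ))) * (a (ks + 1 + n)) ^ 2))
    (hMb : ∑' n : ℕ, (2 : ℝ) ^ (2 * α * ((ks : ℝ) + 1 + (n : ℝ))) * (a (ks + 1 + n)) ^ 2
        ≤ M ^ 2)
    (hM₀b : ∑' n : ℕ, (2 : ℝ) ^ (2 * α₀ * ((ks : ℝ) + 1 + (n : ℝ))) * (a (ks + 1 + n)) ^ 2
        ≤ M₀ ^ 2)
    (γ : ℝ)
    (hγ : γ = if α = 1 / 2 then 1 else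
      ((2 - q) * (α - 1 / 2) + max (1 - q / 2 - q * α₀) 0) /
        (α - 1 / 2 + max (1 - q / 2 - q * α₀) 0)) :
    ∃ kb : ℕ, ks ≤ kb ∧ kb ≤ ke ∧
      ∑ k ∈ Finset.Icc (ks + 1) ke, lam k * min (a k) (lam k)
        ≤ σ ^ γ * (t₀ ^ (-(max (1 - q / 2 - α₀ * q) 0)) * Jfun (1 - q / 2 - α₀ * q) q ks kb
              * M₀ ^ q
            + t₀ ^ (α - 1 / 2) * Jfun (α - 1 / 2) 1 kb ke * M) := by
  set s := (q - 1) / (α - 1 / 2 + max (1 - q / 2 - α₀ * q) 0)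
  obtain ⟨hγ_low, hγ_high⟩ := gamma_eq_two_sub_add_mul_and_one_sub_mul hα hq0 hq1 hα₀ hγ rfl
  -- `kb` is the integer part of `log₂ (σ ^ s / t₀)`, clamped to `[ks, ke]`
  obtain ⟨kb, hks_kb, hkb_ke, hkb_low, hkb_high⟩ :=
    exists_nat_clamp (s * logb 2 σ - logb 2 t₀) hks
  refine ⟨kb, hks_kb, hkb_ke, ?_⟩
  rw [Icc_add_one_left_eq_Ioc, ← sum_Ioc_consecutive _ hks_kb hkb_ke, mul_add]
  exact add_le_add
    (sum_Ioc_mul_min_le_low hq0 hq1 hσ ht₀ hlam0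
      (fun k hk1 hk2 => hlam k hk1 (hk2.trans hkb_ke)) ha hM₀
      (sum_Ioc_two_rpow_mul_sq_le le_rfl hsumα₀ hM₀b) hγ_low hkb_low)
    (sum_Ioc_mul_min_le_high hα hσ ht₀ hlam0
      (fun k hk1 hk2 => hlam k (hks_kb.trans_lt hk1) hk2) ha hM
      (sum_Ioc_two_rpow_mul_sq_le hks_kb hsumα hMb) hγ_high hkb_high)

/-- Inequality (prop-11): the intermediate one-parameter-family bound in the
    proof of Proposition 1: there is a splitting level k̄ such that the sum of
    capped penalties is bounded by
    σ^γ [t₀^{-(1-q/2-α₀q)_+} J^{(q)}_{1-q/2-α₀q}(k*,k̄) M₀^q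
         + t₀^{α-1/2} J^{(1)}_{α-1/2}(k̄,k^*) M]. -/
theorem stmt17 (σ α q α₀ t₀ M M₀ : ℝ) (ks ke : ℕ) (lam a : ℕ → ℝ)
    (hσ : 0 < σ) (hα : 1 / 2 ≤ α) (hq0 : 0 ≤ q) (hq1 : q ≤ 1)
    (hα₀0 : 0 ≤ α₀) (hα₀ : α₀ ≤ α) (hks : ks ≤ ke)
    (hlam0 : ∀ k, 0 ≤ lam k)
    (hlam : ∀ k, ks < k → k ≤ ke → lam k ≤ σ * (2 : ℝ) ^ ((k : ℝ) / 2))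
    (ha : ∀ k, 0 ≤ a k) (hM : 0 ≤ M) (hM₀ : 0 ≤ M₀) (ht₀ : 0 < t₀)
    (hsumα : Summable (fun n : ℕ =>
      (2 : ℝ) ^ (2 * α * ((ks : ℝ) + 1 + (n : ℝ))) * (a (ks + 1 + n)) ^ 2))
    (hsumα₀ : Summable (fun n : ℕ =>
      (2 : ℝ) ^ (2 * α₀ * ((ks : ℝ) + 1 + (n : ℝ))) * (a (ks + 1 + n)) ^ 2))
    (hMb : ∑' n : ℕ, (2 : ℝ) ^ (2 * α * ((ks : ℝ) + 1 + (n : ℝ))) * (a (ks + 1 + n)) ^ 2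
        ≤ M ^ 2)
    (hM₀b : ∑' n : ℕ, (2 : ℝ) ^ (2 * α₀ * ((ks : ℝ) + 1 + (n : ℝ))) * (a (ks + 1 + n)) ^ 2
        ≤ M₀ ^ 2)
    (γ : ℝ)
    (hγ : γ = if α = 1 / 2 then 1 else
      ((2 - q) * (α - 1 / 2) + max (1 - q / 2 - q * α₀) 0) /
        (α - 1 / 2 + max (1 - q / 2 - q * α₀) 0)) :
    ∃ kb : ℕ, ks ≤ kb ∧ kb ≤ ke ∧
      ∑ k ∈ Finset.Icc (ks + 1) ke, lam k * min (a k) (lam k)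
        ≤ σ ^ γ * (t₀ ^ (-(max (1 - q / 2 - α₀ * q) 0)) * Jfun (1 - q / 2 - α₀ * q) q ks kb
              * M₀ ^ q
            + t₀ ^ (α - 1 / 2) * Jfun (α - 1 / 2) 1 kb ke * M) :=
  stmt17_general σ α q α₀ t₀ M M₀ ks ke lam a hσ hα hq0 hq1 hα₀ hks hlam0 hlam ha hM hM₀ ht₀ hsumα
    hsumα₀ hMb hM₀b γ hγ
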